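/- arXiv:1701.03774 — 2 statements merged into one kernel-verified Lean document; each statement's English description precedes it below -/
import Mathlib

section
/- Let H be a linear hypergraph with n vertices, no rank-1 edges, and minimum rank ρ. If n < ρ², then q_list(H) ≤ n. -/
open Finset

variable {V : Type*} [DecidableEq V]

/-- A proper list edge coloring of the hypergraph with edge set `E` from the lists `L`:
each edge gets a color from its list, and two distinct edges get the same color
only if they are disjoint. -/
def IsProperListColoring (E : Finset (Finset V)) (L : Finset V → Finset ℕ)
    (γ : Finset V → ℕ) : Prop :=
  (∀ e ∈ E, γ e ∈ L e) ∧ ∀ e ∈ E, ∀ f ∈ E, e ≠ f → γ e = γ f → Disjoint e f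

/-- `E` is `k`-list-edge-colorable: for every assignment of lists of size `k`
there is a proper list edge coloring. -/
def ListColorable (E : Finset (Finset V)) (k : ℕ) : Prop :=
  ∀ L : Finset V → Finset ℕ, (∀ e ∈ E, (L e).card = k) →
    ∃ γ : Finset V → ℕ, IsProperListColoring E L γ

/-- The list edge chromatic number `q_list`: the least `k` such that `E` is
`k`-list-edge-colorable. -/
noncomputable def qList (E : Finset (Finset V)) : ℕ :=
  sInf {k | ListColorable E k}

/-- The degree of a vertex: the number of edges containing it. -/
def deg (E : Finset (Finset V)) (x : V) : ℕ := (E.filter fun e => x ∈ e).card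

/-- The clique rank of an edge: `R(e) = ∑_{x ∈ e} (d(x) - 1)`. -/
def cliqueRank (E : Finset (Finset V)) (e : Finset V) : ℕ :=
  ∑ x ∈ e, (deg E x - 1)

/-- The clique degree of a vertex: `D(x) = ∑_{e ∋ x} (r(e) - 1)`. -/
def cliqueDeg (E : Finset (Finset V)) (x : V) : ℕ :=
  ∑ e ∈ E.filter (fun e => x ∈ e), (e.card - 1)

/-- A hypergraph is linear if any two distinct edges meet in at most one vertex. -/
def Linear (E : Finset (Finset V)) : Prop :=
  ∀ e ∈ E, ∀ f ∈ E, e ≠ f → (e ∩ f).card ≤ 1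

/-- The number of triangles with side `e`: unordered pairs `{f, g}` of edges
distinct from `e` such that `e, f, g` pairwise intersect. -/
def numTriangles (E : Finset (Finset V)) (e : Finset V) : ℕ :=
  (((E.erase e).powersetCard 2).filter fun p =>
    (∀ f ∈ p, (e ∩ f).Nonempty) ∧ ∀ f ∈ p, ∀ g ∈ p, f ≠ g → (f ∩ g).Nonempty).card


section AuxProofs
variable [Fintype V]


lemma arith_key (r s n1 m q D N : ℕ) (hr : 1 ≤ r) (hs : r + 1 ≤ s)
    (hsm : s + m = n1 + 1) (hn : n1 + 1 ≤ r*r + 2*r)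
    (hq1 : q*r ≤ m) (hq2 : m < (q+1)*r)
    (hD1 : D*r ≤ n1) (hD2 : n1 < (D+1)*r)
    (h1 : N ≤ s*q) (h2 : N*r ≤ m*D) : N ≤ n1 := by
  by_cases hc : s * q ≤ n1
  · exact h1.trans hc
  · push_neg at hc
    have hnq : n1 + 1 ≤ s * q := hc
    by_cases hm2 : m ≤ r * r
    · have key : N * r ≤ n1 * r := by
        calc N * r ≤ m * D := h2
        _ ≤ (r*r) * D := Nat.mul_le_mul_right _ hm2
        _ = r * (D * r) := by ring
        _ ≤ r * n1 := Nat.mul_le_mul_left _ hD1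
        _ = n1 * r := Nat.mul_comm _ _
      exact Nat.le_of_mul_le_mul_right key (by omega)
    · push_neg at hm2
      have hq2' : 2 ≤ q := by
        rcases q with _ | _ | q
        · rw [Nat.mul_zero] at hnq; omega
        · rw [Nat.mul_one] at hnq
          have hm1 : 0 < m := Nat.lt_of_le_of_lt (Nat.zero_le _) hm2
          omega
        · omega
      have hqlr : q ≤ r := by
        have h3 : q * r < (r+1) * r := by linarith
        have := lt_of_mul_lt_mul_right h3 (Nat.zero_le r)
        omega
      have hqgr : r ≤ q := by
        have h4 : r * r < (q+1) * r := by linarith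
        have := lt_of_mul_lt_mul_right h4 (Nat.zero_le r)
        omega
      have hqr' : q = r := le_antisymm hqlr hqgr
      subst hqr'
      have hsr2 : q + 2 ≤ s := by
        by_contra h
        push_neg at h
        have hs' : s = q + 1 := by omega
        subst hs'
        nlinarith
      have hDge : q + 1 ≤ D := by
        have h5 : (q+1)*q < (D+1)*q := by nlinarith
        have := lt_of_mul_lt_mul_right h5 (Nat.zero_le q)
        omega
      have hDle : D ≤ q + 1 := by
        have h6 : D * q < (q+2)*q := by nlinarith
        have := lt_of_mul_lt_mul_right h6 (Nat.zero_le q)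
        omega
      have hD' : D = q + 1 := le_antisymm hDle hDge
      subst hD'
      have hb : m + q + 2 ≤ n1 + 1 := by linarith
      have hint : (m + q + 2) * q ≤ (n1 + 1) * q := Nat.mul_le_mul_right _ hb
      have hfin : N * q ≤ n1 * q := by nlinarith
      exact Nat.le_of_mul_le_mul_right hfin (by omega)

lemma two_le_inter {f g : Finset V} {v w : V} (hvw : v ≠ w) (hv : v ∈ f ∩ g)
    (hw : w ∈ f ∩ g) : 2 ≤ (f ∩ g).card := by
  have hsub : ({v, w} : Finset V) ⊆ f ∩ g := by
    intro x hx
    rcases Finset.mem_insert.1 hx with rfl | hx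
    · exact hv
    · rw [Finset.mem_singleton] at hx; subst hx; exact hw
  have h2 := Finset.card_le_card hsub
  rwa [Finset.card_insert_of_notMem (by simp [hvw]), Finset.card_singleton] at h2

/-- In a linear hypergraph with all edges of size ≥ ρ, every vertex degree `d` satisfies
`d * (ρ-1) ≤ n - 1`. -/
lemma deg_mul_le (E : Finset (Finset V)) (ρ : ℕ) (hlin : Linear E)
    (hρ : ∀ e ∈ E, ρ ≤ e.card) (v : V) :
    (E.filter (fun f => v ∈ f)).card * (ρ - 1) ≤ Fintype.card V - 1 := by
  classical
  set F := E.filter (fun f => v ∈ f) with hF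
  have hmemF : ∀ f ∈ F, f ∈ E ∧ v ∈ f := by
    intro f hf; exact Finset.mem_filter.1 hf
  have hdisj : ∀ f ∈ F, ∀ g ∈ F, f ≠ g → Disjoint (f.erase v) (g.erase v) := by
    intro f hf g hg hfg
    rw [Finset.disjoint_left]
    intro w hwf hwg
    rw [Finset.mem_erase] at hwf hwg
    have h2 := two_le_inter (Ne.symm hwf.1)
      (Finset.mem_inter.2 ⟨(hmemF f hf).2, (hmemF g hg).2⟩)
      (Finset.mem_inter.2 ⟨hwf.2, hwg.2⟩)
    have := hlin f (hmemF f hf).1 g (hmemF g hg).1 hfg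
    omega
  have hsum : ∑ f ∈ F, (f.erase v).card = (F.biUnion (fun f => f.erase v)).card :=
    (Finset.card_biUnion hdisj).symm
  have hsub : F.biUnion (fun f => f.erase v) ⊆ Finset.univ.erase v := by
    intro w hw
    rw [Finset.mem_biUnion] at hw
    obtain ⟨f, hf, hwf⟩ := hw
    rw [Finset.mem_erase] at hwf ⊢
    exact ⟨hwf.1, Finset.mem_univ _⟩
  have hcard : (F.biUnion (fun f => f.erase v)).card ≤ Fintype.card V - 1 := by
    have h := Finset.card_le_card hsub
    rwa [Finset.card_erase_of_mem (Finset.mem_univ v), Finset.card_univ] at h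
  have hlow : F.card * (ρ - 1) ≤ ∑ f ∈ F, (f.erase v).card := by
    have : ∀ f ∈ F, ρ - 1 ≤ (f.erase v).card := by
      intro f hf
      rw [Finset.card_erase_of_mem (hmemF f hf).2]
      have := hρ f (hmemF f hf).1
      omega
    calc F.card * (ρ - 1) = F.card • (ρ - 1) := (smul_eq_mul _ _).symm
    _ ≤ ∑ f ∈ F, (f.erase v).card := Finset.card_nsmul_le_sum F _ _ this
  omega

/-- Per-vertex bound inside `e`: edges other than `e` through `x ∈ e` have disjoint
parts outside `e`. -/
lemma deg_in_edge_mul_le (E : Finset (Finset V)) (ρ : ℕ) (hlin : Linear E)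
    (hρ : ∀ e ∈ E, ρ ≤ e.card) (e : Finset V) (he : e ∈ E) (x : V) (hx : x ∈ e) :
    ((E.erase e).filter (fun f => x ∈ f)).card * (ρ - 1)
      ≤ Fintype.card V - e.card := by
  classical
  set F := (E.erase e).filter (fun f => x ∈ f) with hF
  have hmemF : ∀ f ∈ F, f ∈ E ∧ f ≠ e ∧ x ∈ f := by
    intro f hf
    have h := Finset.mem_filter.1 hf
    have h' := Finset.mem_erase.1 h.1
    exact ⟨h'.2, h'.1, h.2⟩
  have hinter : ∀ f ∈ F, f ∩ e = {x} := by
    intro f hf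
    obtain ⟨hfE, hfe, hxf⟩ := hmemF f hf
    have hle := hlin f hfE e he hfe
    have hmem : x ∈ f ∩ e := Finset.mem_inter.2 ⟨hxf, hx⟩
    have h1 : 0 < (f ∩ e).card := Finset.card_pos.2 ⟨x, hmem⟩
    have : (f ∩ e).card = 1 := le_antisymm hle h1
    rw [Finset.card_eq_one] at this
    obtain ⟨a, ha⟩ := this
    rw [ha] at hmem ⊢
    rw [Finset.mem_singleton] at hmem
    rw [hmem]
  have hdisj : ∀ f ∈ F, ∀ g ∈ F, f ≠ g → Disjoint (f \ e) (g \ e) := by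
    intro f hf g hg hfg
    rw [Finset.disjoint_left]
    intro w hwf hwg
    rw [Finset.mem_sdiff] at hwf hwg
    have hwx : w ≠ x := fun h => hwf.2 (h ▸ hx)
    have h2 := two_le_inter hwx
      (Finset.mem_inter.2 ⟨hwf.1, hwg.1⟩)
      (Finset.mem_inter.2 ⟨(hmemF f hf).2.2, (hmemF g hg).2.2⟩)
    have := hlin f (hmemF f hf).1 g (hmemF g hg).1 hfg
    omega
  have hsum : ∑ f ∈ F, (f \ e).card = (F.biUnion (fun f => f \ e)).card :=
    (Finset.card_biUnion hdisj).symm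
  have hsub : F.biUnion (fun f => f \ e) ⊆ Finset.univ \ e := by
    intro w hw
    rw [Finset.mem_biUnion] at hw
    obtain ⟨f, hf, hwf⟩ := hw
    rw [Finset.mem_sdiff] at hwf ⊢
    exact ⟨Finset.mem_univ _, hwf.2⟩
  have hcard : (F.biUnion (fun f => f \ e)).card ≤ Fintype.card V - e.card := by
    have h := Finset.card_le_card hsub
    rwa [Finset.card_sdiff_of_subset (Finset.subset_univ e), Finset.card_univ] at h
  have hlow : F.card * (ρ - 1) ≤ ∑ f ∈ F, (f \ e).card := by
    have hbd : ∀ f ∈ F, ρ - 1 ≤ (f \ e).card := by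
      intro f hf
      have hcardf := hρ f (hmemF f hf).1
      have hadd := Finset.card_sdiff_add_card_inter f e
      rw [hinter f hf, Finset.card_singleton] at hadd
      omega
    calc F.card * (ρ - 1) = F.card • (ρ - 1) := (smul_eq_mul _ _).symm
    _ ≤ ∑ f ∈ F, (f \ e).card := Finset.card_nsmul_le_sum F _ _ hbd
  omega


lemma nbr_card_le (E : Finset (Finset V)) (ρ : ℕ) (hlin : Linear E)
    (h2 : ∀ e ∈ E, 2 ≤ e.card) (hρ : ∀ e ∈ E, ρ ≤ e.card)
    (hn : Fintype.card V < ρ ^ 2) (e : Finset V) (he : e ∈ E) :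
    ((E.erase e).filter (fun f => ¬ Disjoint e f)).card + 1 ≤ Fintype.card V := by
  classical
  set n := Fintype.card V with hndef
  set s := e.card with hsdef
  have hsn : s ≤ n := by
    have := Finset.card_le_card (Finset.subset_univ e)
    rwa [Finset.card_univ] at this
  have hs2 : 2 ≤ s := h2 e he
  have hn2 : 2 ≤ n := le_trans hs2 hsn
  have hρ2 : 2 ≤ ρ := by
    by_contra h
    push_neg at h
    have : ρ ^ 2 ≤ 1 ^ 2 := Nat.pow_le_pow_left (by omega) 2
    rw [one_pow] at this
    omega
  set r := ρ - 1 with hrdef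
  have hr1 : 1 ≤ r := by omega
  have hr0 : 0 < r := hr1
  set m := n - s with hmdef
  set q := m / r with hqdef
  set D := (n - 1) / r with hDdef
  set Nb := (E.erase e).filter (fun f => ¬ Disjoint e f) with hNbdef
  have hmemNb : ∀ f ∈ Nb, f ∈ E ∧ f ≠ e ∧ (e ∩ f).Nonempty := by
    intro f hf
    have h := Finset.mem_filter.1 hf
    have h' := Finset.mem_erase.1 h.1
    exact ⟨h'.2, h'.1, Finset.not_disjoint_iff_nonempty_inter.1 h.2⟩
  -- Bound 1 : Nb.card ≤ s * q
  have hbound1 : Nb.card ≤ s * q := by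
    have hsub : Nb ⊆ e.biUnion (fun x => (E.erase e).filter (fun f => x ∈ f)) := by
      intro f hf
      obtain ⟨hfE, hfe, x, hx⟩ := hmemNb f hf
      rw [Finset.mem_inter] at hx
      rw [Finset.mem_biUnion]
      exact ⟨x, hx.1, Finset.mem_filter.2 ⟨Finset.mem_erase.2 ⟨hfe, hfE⟩, hx.2⟩⟩
    calc Nb.card ≤ (e.biUnion (fun x => (E.erase e).filter (fun f => x ∈ f))).card :=
          Finset.card_le_card hsub
    _ ≤ ∑ x ∈ e, ((E.erase e).filter (fun f => x ∈ f)).card := Finset.card_biUnion_le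
    _ ≤ e.card * q := by
        refine Finset.sum_le_card_nsmul e _ q ?_
        intro x hx
        have hmul := deg_in_edge_mul_le E ρ hlin hρ e he x hx
        rw [Nat.le_div_iff_mul_le hr0]
        exact hmul
  -- Bound 2 : Nb.card * r ≤ m * D
  have hbound2 : Nb.card * r ≤ m * D := by
    have hstep1 : Nb.card * r ≤ ∑ f ∈ Nb, (f \ e).card := by
      have hbd : ∀ f ∈ Nb, r ≤ (f \ e).card := by
        intro f hf
        obtain ⟨hfE, hfe, hne⟩ := hmemNb f hf
        have hle := hlin f hfE e he hfe
        rw [Finset.inter_comm] at hle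
        have h1 : (e ∩ f).card = 1 := le_antisymm hle (Finset.card_pos.2 hne)
        have hadd := Finset.card_sdiff_add_card_inter f e
        rw [Finset.inter_comm, h1] at hadd
        have := hρ f hfE
        omega
      calc Nb.card * r = Nb.card • r := (smul_eq_mul _ _).symm
      _ ≤ ∑ f ∈ Nb, (f \ e).card := Finset.card_nsmul_le_sum Nb _ _ hbd
    have hstep2 : ∑ f ∈ Nb, (f \ e).card
        = ∑ v ∈ Finset.univ \ e, (Nb.filter (fun f => v ∈ f)).card := by
      have hfe : ∀ f : Finset V, f \ e = (Finset.univ \ e).filter (fun v => v ∈ f) := by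
        intro f
        ext v
        simp [Finset.mem_sdiff, Finset.mem_filter, and_comm]
      calc ∑ f ∈ Nb, (f \ e).card
          = ∑ f ∈ Nb, ∑ v ∈ Finset.univ \ e, (if v ∈ f then 1 else 0) := by
            refine Finset.sum_congr rfl ?_
            intro f _
            rw [hfe f, Finset.card_filter]
      _ = ∑ v ∈ Finset.univ \ e, ∑ f ∈ Nb, (if v ∈ f then 1 else 0) := Finset.sum_comm
      _ = ∑ v ∈ Finset.univ \ e, (Nb.filter (fun f => v ∈ f)).card := by
            refine Finset.sum_congr rfl ?_
            intro v _
            rw [Finset.card_filter]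
    have hstep3 : ∀ v : V, (Nb.filter (fun f => v ∈ f)).card ≤ D := by
      intro v
      have hsub : Nb.filter (fun f => v ∈ f) ⊆ E.filter (fun f => v ∈ f) := by
        refine Finset.filter_subset_filter _ ?_
        intro f hf
        exact (hmemNb f hf).1
      have hmul := deg_mul_le E ρ hlin hρ v
      rw [hDdef, Nat.le_div_iff_mul_le hr0]
      calc (Nb.filter (fun f => v ∈ f)).card * r
          ≤ (E.filter (fun f => v ∈ f)).card * r :=
            Nat.mul_le_mul_right _ (Finset.card_le_card hsub)
      _ ≤ n - 1 := hmul
    calc Nb.card * r ≤ ∑ f ∈ Nb, (f \ e).card := hstep1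
    _ = ∑ v ∈ Finset.univ \ e, (Nb.filter (fun f => v ∈ f)).card := hstep2
    _ ≤ ∑ v ∈ Finset.univ \ e, D := Finset.sum_le_sum (fun v _ => hstep3 v)
    _ = m * D := by
        rw [Finset.sum_const, smul_eq_mul, Finset.card_sdiff_of_subset (Finset.subset_univ e),
          Finset.card_univ]
  -- assemble
  have hse : ρ ≤ s := hρ e he
  clear_value Nb D q m r s n
  obtain ⟨t, ht⟩ : ∃ t, ρ = t + 2 := ⟨ρ - 2, by omega⟩
  have hrsq : r * r + 2 * r + 1 = ρ * ρ := by
    subst ht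
    have : r = t + 1 := by omega
    rw [this]
    ring
  have hnle : n - 1 + 1 ≤ r * r + 2 * r := by
    have hρn : n < ρ * ρ := by rw [← pow_two]; exact hn
    omega
  have hq2 : m < (q + 1) * r := by
    have hdm := Nat.div_add_mod m r
    have hmod := Nat.mod_lt m hr0
    have hexp : (q + 1) * r = r * (m / r) + r := by rw [hqdef]; ring
    omega
  have hD2 : n - 1 < (D + 1) * r := by
    have hdm := Nat.div_add_mod (n - 1) r
    have hmod := Nat.mod_lt (n - 1) hr0
    have hexp : (D + 1) * r = r * ((n - 1) / r) + r := by rw [hDdef]; ring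
    have hexp2 : D * r = r * ((n - 1) / r) := by rw [hDdef]; ring
    omega
  have hfinal := arith_key r s (n - 1) m q D Nb.card hr1 (by omega)
    (by omega) hnle (by rw [hqdef]; exact Nat.div_mul_le_self m r) hq2
    (by rw [hDdef]; exact Nat.div_mul_le_self _ _) hD2 hbound1 hbound2
  omega

end AuxProofs

lemma greedy (E : Finset (Finset V)) (n : ℕ)
    (hdeg : ∀ e ∈ E, ((E.erase e).filter (fun f => ¬ Disjoint e f)).card + 1 ≤ n) :
    ListColorable E n := by
  classical
  intro L hL
  suffices h : ∀ k (E' : Finset (Finset V)), E'.card = k → E' ⊆ E →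
      ∃ γ, IsProperListColoring E' L γ from h E.card E rfl (Finset.Subset.refl E)
  intro k
  induction k with
  | zero =>
    intro E' hc _
    rw [Finset.card_eq_zero] at hc
    subst hc
    exact ⟨fun _ => 0, by simp [IsProperListColoring], by simp⟩
  | succ k ih =>
    intro E' hc hsub
    have hne : E'.Nonempty := Finset.card_pos.mp (by omega)
    obtain ⟨e, he⟩ := hne
    obtain ⟨γ, hγ1, hγ2⟩ := ih (E'.erase e) (by rw [Finset.card_erase_of_mem he]; omega)
      ((Finset.erase_subset e E').trans hsub)
    set B := ((E'.erase e).filter (fun f => ¬ Disjoint e f)).image γ with hB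
    have heE : e ∈ E := hsub he
    have hcard : B.card < (L e).card := by
      have h1 : B.card ≤ ((E'.erase e).filter (fun f => ¬ Disjoint e f)).card :=
        Finset.card_image_le
      have h2 : (E'.erase e).filter (fun f => ¬ Disjoint e f) ⊆
          (E.erase e).filter (fun f => ¬ Disjoint e f) :=
        Finset.filter_subset_filter _ (Finset.erase_subset_erase _ hsub)
      have h3 := Finset.card_le_card h2
      have h4 := hdeg e heE
      rw [hL e heE]
      omega
    have hnon : ((L e) \ B).Nonempty := by
      rw [← Finset.card_pos]
      have := Finset.le_card_sdiff B (L e)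
      omega
    obtain ⟨c, hc'⟩ := hnon
    rw [Finset.mem_sdiff] at hc'
    refine ⟨Function.update γ e c, ?_, ?_⟩
    · intro f hf
      by_cases hfe : f = e
      · subst hfe
        rw [Function.update_self]
        exact hc'.1
      · rw [Function.update_of_ne hfe]
        exact hγ1 f (Finset.mem_erase.2 ⟨hfe, hf⟩)
    · intro f hf g hg hfg heq
      by_cases hfe : f = e
      · have hge : g ≠ e := fun h => hfg (hfe.trans h.symm)
        rw [hfe, Function.update_self, Function.update_of_ne hge] at heq
        rw [hfe]
        by_contra hnd
        have hmem : γ g ∈ B := by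
          rw [hB]
          refine Finset.mem_image.2 ⟨g, ?_, rfl⟩
          exact Finset.mem_filter.2 ⟨Finset.mem_erase.2 ⟨hge, hg⟩, hnd⟩
        rw [← heq] at hmem
        exact hc'.2 hmem
      · by_cases hge : g = e
        · rw [hge, Function.update_self, Function.update_of_ne hfe] at heq
          rw [hge]
          by_contra hnd
          have hnd' : ¬ Disjoint e f := fun h => hnd h.symm
          have hmem : γ f ∈ B := by
            rw [hB]
            refine Finset.mem_image.2 ⟨f, ?_, rfl⟩
            exact Finset.mem_filter.2 ⟨Finset.mem_erase.2 ⟨hfe, hf⟩, hnd'⟩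
          rw [heq] at hmem
          exact hc'.2 hmem
        · rw [Function.update_of_ne hfe, Function.update_of_ne hge] at heq
          exact hγ2 f (Finset.mem_erase.2 ⟨hfe, hf⟩) g (Finset.mem_erase.2 ⟨hge, hg⟩) hfg heq


/-- A linear hypergraph on `n` vertices with no rank-1 edges and minimum rank `ρ`
with `n < ρ²` satisfies `q_list(H) ≤ n`. -/
theorem stmt8 {V : Type*} [DecidableEq V] [Fintype V] (E : Finset (Finset V)) (ρ : ℕ)
    (hlin : Linear E) (h2 : ∀ e ∈ E, 2 ≤ e.card)
    (hρ : ∀ e ∈ E, ρ ≤ e.card)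
    (hn : Fintype.card V < ρ ^ 2) :
    qList E ≤ Fintype.card V := by
  refine Nat.sInf_le ?_
  exact greedy E (Fintype.card V) (fun e he => nbr_card_le E ρ hlin h2 hρ hn e he)
end

section
/- Let H be a linear hypergraph with no rank-1 edges such that q_list(H) > D(H) + 1 and q_list(H ∖ {e}) ≤ D(H) + 1 for every edge e. Then every edge e satisfies R(e) ≥ D(H). -/
/-
If `R(e) < D(H)`, fix lists of size `D(H) + 1`. By minimality `H ∖ {e}` can be colored from them,
and the edges meeting `e` number at most `R(e) < D(H) + 1`, so some color of `L e` is unused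
on them and the coloring extends to `e`. Hence `q_list(H) ≤ D(H) + 1`, a contradiction.
-/

open Finset

variable {V : Type*} [DecidableEq V]

def edgeNeighbors (E : Finset (Finset V)) (e : Finset V) : Finset (Finset V) :=
  (E.erase e).filter fun f => ¬Disjoint e f

lemma card_edgeNeighbors_le_cliqueRank {E : Finset (Finset V)} {e : Finset V} (he : e ∈ E) :
    (edgeNeighbors E e).card ≤ cliqueRank E e := by
  have hcover : edgeNeighbors E e ⊆ e.biUnion fun x => (E.erase e).filter (x ∈ ·) := by
    intro f hf
    simp only [edgeNeighbors, mem_filter, not_disjoint_iff] at hf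
    obtain ⟨hfE, x, hxe, hxf⟩ := hf
    exact mem_biUnion.mpr ⟨x, hxe, mem_filter.mpr ⟨hfE, hxf⟩⟩
  calc (edgeNeighbors E e).card
      ≤ ∑ x ∈ e, ((E.erase e).filter (x ∈ ·)).card := (card_le_card hcover).trans card_biUnion_le
    _ = cliqueRank E e := by
      refine sum_congr rfl fun x hx => ?_
      rw [filter_erase, card_erase_of_mem (mem_filter.mpr ⟨he, hx⟩), deg]

lemma IsProperListColoring.exists_update {E : Finset (Finset V)} {L : Finset V → Finset ℕ}
    {γ : Finset V → ℕ} {e : Finset V} (hγ : IsProperListColoring (E.erase e) L γ)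
    (hL : (edgeNeighbors E e).card < (L e).card) :
    ∃ c, IsProperListColoring E L (Function.update γ e c) := by
  obtain ⟨c, hcL, hcfree⟩ : ∃ c ∈ L e, c ∉ (edgeNeighbors E e).image γ :=
    exists_mem_notMem_of_card_lt_card (card_image_le.trans_lt hL)
  have hdisj : ∀ f ∈ E, f ≠ e → c = γ f → Disjoint e f := fun f hf hfe hc => by
    by_contra hmeet
    exact hcfree (mem_image.mpr ⟨f, mem_filter.mpr ⟨mem_erase.mpr ⟨hfe, hf⟩, hmeet⟩, hc.symm⟩)
  refine ⟨c, fun f hf => ?_, fun f hf g hg hfg hcol => ?_⟩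
  · rcases eq_or_ne f e with rfl | hfe
    · simpa using hcL
    · simpa [hfe] using hγ.1 f (mem_erase.mpr ⟨hfe, hf⟩)
  · rcases eq_or_ne f e with rfl | hfe <;> rcases eq_or_ne g f with rfl | hgf
    · exact absurd rfl hfg
    · simp only [Function.update_self, Function.update_of_ne hgf] at hcol
      exact hdisj g hg hgf hcol
    · exact absurd rfl hfg
    · rcases eq_or_ne g e with rfl | hge
      · simp only [Function.update_self, Function.update_of_ne hfe] at hcol
        exact (hdisj f hf hfe hcol.symm).symm
      · simp only [Function.update_of_ne hfe, Function.update_of_ne hge] at hcol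
        exact hγ.2 f (mem_erase.mpr ⟨hfe, hf⟩) g (mem_erase.mpr ⟨hge, hg⟩) hfg hcol

lemma ListColorable.of_erase {E : Finset (Finset V)} {e : Finset V} {k : ℕ}
    (h : ListColorable (E.erase e) k) (hk : (edgeNeighbors E e).card < k) :
    ListColorable E k := by
  intro L hL
  obtain ⟨γ, hγ⟩ := h L fun f hf => hL f (mem_of_mem_erase hf)
  by_cases he : e ∈ E
  · obtain ⟨c, hc⟩ := hγ.exists_update (hL e he ▸ hk)
    exact ⟨_, hc⟩
  · exact ⟨γ, by rwa [erase_eq_of_notMem he] at hγ⟩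

lemma listColorable_of_card_le {E : Finset (Finset V)} {k : ℕ} (hk : E.card ≤ k) :
    ListColorable E k := by
  induction E using Finset.induction_on with
  | empty => exact fun _ _ => ⟨fun _ => 0, by simp [IsProperListColoring]⟩
  | insert e E he ih =>
    rw [card_insert_of_notMem he] at hk
    refine ListColorable.of_erase (e := e) (by rw [erase_insert he]; exact ih (by omega)) ?_
    calc (edgeNeighbors (insert e E) e).card ≤ ((insert e E).erase e).card := card_filter_le _ _
      _ < k := by rw [erase_insert he]; omega

lemma ListColorable.mono {E : Finset (Finset V)} {k k' : ℕ} (h : ListColorable E k)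
    (hk : k ≤ k') : ListColorable E k' := by
  intro L hL
  have hsub : ∀ f, ∃ t : Finset ℕ, f ∈ E → t ⊆ L f ∧ t.card = k := fun f => by
    by_cases hf : f ∈ E
    · obtain ⟨t, hts, htk⟩ := exists_subset_card_eq ((hL f hf).symm ▸ hk)
      exact ⟨t, fun _ => ⟨hts, htk⟩⟩
    · exact ⟨∅, fun h => absurd h hf⟩
  choose L' hL' using hsub
  obtain ⟨γ, hγL, hγ⟩ := h L' fun f hf => (hL' f hf).2
  exact ⟨γ, fun f hf => (hL' f hf).1 (hγL f hf), hγ⟩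

lemma listColorable_of_qList_le {E : Finset (Finset V)} {k : ℕ} (h : qList E ≤ k) :
    ListColorable E k :=
  (Nat.sInf_mem (s := {k | ListColorable E k}) ⟨_, listColorable_of_card_le le_rfl⟩).mono h

theorem stmt17_general {V : Type*} [DecidableEq V] [Fintype V] (E : Finset (Finset V))
    (hq : Finset.univ.sup (cliqueDeg E) + 1 < qList E)
    (hdel : ∀ e ∈ E, qList (E.erase e) ≤ Finset.univ.sup (cliqueDeg E) + 1) :
    ∀ e ∈ E, Finset.univ.sup (cliqueDeg E) ≤ cliqueRank E e := by
  intro e he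
  by_contra! hR
  have hcol : ListColorable E (Finset.univ.sup (cliqueDeg E) + 1) :=
    (listColorable_of_qList_le (hdel e he)).of_erase
      (Nat.lt_succ_of_lt ((card_edgeNeighbors_le_cliqueRank he).trans_lt hR))
  exact absurd (Nat.sInf_le hcol) (not_le.mpr hq)

/-- If `H` is a linear hypergraph with no rank-1 edges such that
`q_list(H) > D(H) + 1` while `q_list(H \ {e}) ≤ D(H) + 1` for every edge `e`, then
every edge satisfies `R(e) ≥ D(H)`. -/
theorem stmt17 {V : Type*} [DecidableEq V] [Fintype V] (E : Finset (Finset V))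
    (hlin : Linear E) (h2 : ∀ e ∈ E, 2 ≤ e.card)
    (hq : Finset.univ.sup (cliqueDeg E) + 1 < qList E)
    (hdel : ∀ e ∈ E, qList (E.erase e) ≤ Finset.univ.sup (cliqueDeg E) + 1) :
    ∀ e ∈ E, Finset.univ.sup (cliqueDeg E) ≤ cliqueRank E e :=
  stmt17_general E hq hdel
end
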